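/- arXiv:2310.01305 — 2 statements merged into one kernel-verified Lean document; each statement's English description precedes it below -/
import Mathlib

section
/- Let n = 2^k · p^2 be a 2-near perfect number with omitted divisors d₁ and d₂, where p is an odd prime and k is a positive integer. If both omitted divisors are powers of 2, i.e. d₁ = 2^a and d₂ = 2^b for some nonnegative integers a ≠ b, then n = 18 and {d₁, d₂} = {1, 2}. -/
/-! Since `p` is odd, `σ n = σ(2^k) (1 + p + p²)` with `σ(2^k) + 1 = 2^(k+1)`, and the equation
`σ n = 2n + d₁ + d₂` becomes `σ(2^k) (p + 1) = p² + d₁ + d₂`. The omitted divisors are distinct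
divisors of `2^k`, so `d₁ + d₂ ≤ σ(2^k)`, and this squeezes `σ(2^k) = p = d₁ + d₂`. Hence
`2^a + 2^b + 1 = 2^(k+1)`, which a look modulo 4 shows is only `1 + 2 + 1 = 4`: `k = 1`, `p = 3`. -/

open ArithmeticFunction
open scoped ArithmeticFunction.sigma

theorem sigma_one_two_pow_add_one (k : ℕ) : σ 1 (2 ^ k) + 1 = 2 ^ (k + 1) := by
  have h := geom_sum_mul_add 1 (k + 1)
  norm_num at h
  rwa [sigma_one_apply_prime_pow Nat.prime_two]

theorem sigma_one_prime_sq {p : ℕ} (hp : p.Prime) : σ 1 (p ^ 2) = 1 + p + p ^ 2 := by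
  simp [sigma_one_apply_prime_pow hp, Finset.sum_range_succ]

theorem add_le_sigma_one_of_dvd {n d₁ d₂ : ℕ} (hn : n ≠ 0) (hne : d₁ ≠ d₂) (h₁ : d₁ ∣ n)
    (h₂ : d₂ ∣ n) : d₁ + d₂ ≤ σ 1 n := by
  rw [sigma_one_apply, ← Finset.sum_pair (f := fun d => d) hne]
  exact Finset.sum_le_sum_of_subset (by simp [Finset.insert_subset_iff, *])

theorem eq_and_eq_of_mul_succ_eq_sq_add {S p s : ℕ} (hp : 0 < p) (hs : s ≤ S)
    (h : S * (p + 1) = p ^ 2 + s) : S = p ∧ s = p := by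
  have hS : S = p := by
    rcases lt_trichotomy S p with hlt | heq | hgt
    · nlinarith
    · exact heq
    · nlinarith [Nat.mul_le_mul_right p (Nat.succ_le_of_lt hgt)]
  subst hS
  constructor <;> nlinarith

theorem two_pow_add_two_pow_add_one_eq_two_pow {a b m : ℕ} (h : 2 ^ a + 2 ^ b + 1 = 2 ^ m) :
    (2 ^ a = 1 ∧ 2 ^ b = 2 ∨ 2 ^ a = 2 ∧ 2 ^ b = 1) ∧ 2 ^ m = 4 := by
  have trichotomy (c : ℕ) : 2 ^ c = 1 ∨ 2 ^ c = 2 ∨ (4 ∣ 2 ^ c ∧ 0 < 2 ^ c) := by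
    rcases c with _ | _ | c
    · simp
    · simp
    · exact Or.inr (Or.inr ⟨⟨2 ^ c, by ring⟩, by positivity⟩)
  have ha := trichotomy a
  have hb := trichotomy b
  have hm := trichotomy m
  omega

theorem case_1_implies_n_eq_18_general
    (n k p d₁ d₂ : ℕ) (hp : p.Prime) (hpodd : Odd p)
    (hn : n = 2 ^ k * p ^ 2)
    (hd₁ : d₁ ∣ n) (hd₂ : d₂ ∣ n)
    (hne : d₁ ≠ d₂) (hσ : ArithmeticFunction.sigma 1 n = 2 * n + d₁ + d₂)
    (hpow : ∃ a b : ℕ, a ≠ b ∧ d₁ = 2 ^ a ∧ d₂ = 2 ^ b) :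
    n = 18 ∧ ((d₁ = 1 ∧ d₂ = 2) ∨ (d₁ = 2 ∧ d₂ = 1)) := by
  obtain ⟨a, b, -, rfl, rfl⟩ := hpow
  subst hn
  have hcop (i : ℕ) : Nat.Coprime (2 ^ i) (p ^ 2) :=
    Nat.Coprime.pow _ _ (Nat.coprime_two_left.2 hpodd)
  have hs : 2 ^ a + 2 ^ b ≤ σ 1 (2 ^ k) :=
    add_le_sigma_one_of_dvd (by positivity) hne ((hcop a).dvd_of_dvd_mul_right hd₁)
      ((hcop b).dvd_of_dvd_mul_right hd₂)
  have hS := sigma_one_two_pow_add_one k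
  rw [isMultiplicative_sigma.map_mul_of_coprime (hcop k), sigma_one_prime_sq hp] at hσ
  have hreduced : σ 1 (2 ^ k) * (p + 1) = p ^ 2 + (2 ^ a + 2 ^ b) := by
    have h2n : 2 * (2 ^ k * p ^ 2) = (σ 1 (2 ^ k) + 1) * p ^ 2 := by rw [hS]; ring
    rw [h2n] at hσ
    linarith
  obtain ⟨hSp, hsp⟩ := eq_and_eq_of_mul_succ_eq_sq_add hp.pos hs hreduced
  obtain ⟨hab, hk⟩ := 
    two_pow_add_two_pow_add_one_eq_two_pow (a := a) (b := b) (m := k + 1) (by omega)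
  have h2k : 2 ^ k = 2 := by rw [pow_succ] at hk; omega
  have hp3 : p = 3 := by omega
  rw [h2k, hp3]
  exact ⟨rfl, hab⟩

theorem case_1_implies_n_eq_18
    (n k p d₁ d₂ : ℕ) (hk : 0 < k) (hp : p.Prime) (hpodd : Odd p)
    (hn : n = 2 ^ k * p ^ 2)
    (hd₁ : d₁ ∣ n) (hd₂ : d₂ ∣ n) (hd₁pos : 0 < d₁) (hd₂pos : 0 < d₂)
    (hne : d₁ ≠ d₂) (hσ : ArithmeticFunction.sigma 1 n = 2 * n + d₁ + d₂)
    (hpow : ∃ a b : ℕ, a ≠ b ∧ d₁ = 2 ^ a ∧ d₂ = 2 ^ b) :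
    n = 18 ∧ ((d₁ = 1 ∧ d₂ = 2) ∨ (d₁ = 2 ∧ d₂ = 1)) :=
  case_1_implies_n_eq_18_general n k p d₁ d₂ hp hpodd hn hd₁ hd₂ hne hσ hpow
end

section
/- Let k, a, b be integers with 0 < a < b ≤ k such that p = 2^(k+1) − 2^a − 2^b − 1 is prime, and let n = 2^k · p. Then n is 2-near perfect with omitted divisors 2^a and 2^b, i.e. σ(n) = 2n + 2^a + 2^b. -/
open ArithmeticFunction
open scoped ArithmeticFunction.sigma

/-!
For an odd prime `p`, multiplicativity gives `σ(2^k p) = (2^(k+1) - 1)(p + 1)`. Writing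
`2^(k+1) = p + 1 + c`, this equals `(p + c)(p + 1) = 2^(k+1) p + c`, so `2^k p` exceeds
perfection by exactly `c`; here `c = 2^a + 2^b`, and `p` is odd because `a, b > 0`.
-/

lemma sigma_one_two_pow (k : ℕ) : σ 1 (2 ^ k) = 2 ^ (k + 1) - 1 := by
  rw [sigma_one_apply_prime_pow Nat.prime_two, Nat.geomSum_eq le_rfl, Nat.div_one]

lemma sigma_one_prime {p : ℕ} (hp : p.Prime) : σ 1 p = p + 1 := by
  simpa [add_comm] using sigma_one_apply_prime_pow hp (i := 1)

lemma sigma_one_two_pow_mul_of_odd_prime {p : ℕ} (hp : p.Prime) (hodd : Odd p) (k : ℕ) :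
    σ 1 (2 ^ k * p) = (2 ^ (k + 1) - 1) * (p + 1) := by
  rw [isMultiplicative_sigma.map_mul_of_coprime (hodd.coprime_two_left.pow_left k),
    sigma_one_two_pow, sigma_one_prime hp]

lemma sigma_one_two_pow_mul_of_odd_prime_of_add_eq {p k c : ℕ} (hp : p.Prime) (hodd : Odd p)
    (hc : p + 1 + c = 2 ^ (k + 1)) : σ 1 (2 ^ k * p) = 2 * (2 ^ k * p) + c := by
  have h2k : 2 * 2 ^ k = p + 1 + c := by rw [hc, pow_succ, mul_comm]
  rw [sigma_one_two_pow_mul_of_odd_prime hp hodd, ← hc, ← mul_assoc, h2k,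
    show p + 1 + c - 1 = p + c by omega]
  ring

theorem family_two_is_two_near_perfect_general
    (k a b p n : ℕ) (ha : 0 < a) (hab : a < b)
    (hpeq : p = 2 ^ (k + 1) - 2 ^ a - 2 ^ b - 1) (hp : p.Prime)
    (hn : n = 2 ^ k * p) :
    σ 1 n = 2 * n + 2 ^ a + 2 ^ b := by
  -- `p ≥ 2` rules out truncation in the subtractions of `hpeq`.
  have hsum : p + 1 + (2 ^ a + 2 ^ b) = 2 ^ (k + 1) := by
    have := hp.two_le
    omega
  have hodd : Odd p := by
    have h2a : 2 ∣ 2 ^ a := dvd_pow_self 2 ha.ne'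
    have h2b : 2 ∣ 2 ^ b := dvd_pow_self 2 (by omega)
    have h2k : 2 ∣ 2 ^ (k + 1) := dvd_pow_self 2 k.succ_ne_zero
    rw [Nat.odd_iff]
    omega
  rw [hn, sigma_one_two_pow_mul_of_odd_prime_of_add_eq hp hodd hsum, add_assoc]

theorem family_two_is_two_near_perfect
    (k a b p n : ℕ) (ha : 0 < a) (hab : a < b) (hbk : b ≤ k)
    (hpeq : p = 2 ^ (k + 1) - 2 ^ a - 2 ^ b - 1) (hp : p.Prime)
    (hn : n = 2 ^ k * p) :
    σ 1 n = 2 * n + 2 ^ a + 2 ^ b :=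
  family_two_is_two_near_perfect_general k a b p n ha hab hpeq hp hn
end
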